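/- arXiv:0711.3863 — 3 statements merged into one kernel-verified Lean document; each statement's English description precedes it below -/
import Mathlib

section
/- For any totally positive element α of a totally real number field F of degree n, and any ε > 0, there exists a nonzero element c in the ring of integers O_F such that Tr(c²α)/N(c²α)^{1/n} < n + ε. -/
/-!
By weak approximation at the real places, `F` is dense in `ℝⁿ` under its real embeddings, so
some `x ∈ F` has every conjugate of `x²α` as close to `1` as we like. Near the point
`(1, …, 1)` the ratio `Tr / N^(1/n)` is close to its value `n` there, and multiplying `x` by a
nonzero integer that clears its denominators leaves the ratio unchanged, since it is invariant
under scaling by positive rationals.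
-/

open NumberField InfinitePlace Module Filter Topology

theorem eventually_sum_div_prod_rpow_lt {ι : Type*} [Fintype ι] {ε : ℝ} (hε : 0 < ε) :
    ∀ᶠ v in 𝓝 (1 : ι → ℝ),
      (∑ i, v i) / (∏ i, v i) ^ ((Fintype.card ι : ℝ)⁻¹) < Fintype.card ι + ε := by
  have hcont : ContinuousAt
      (fun v : ι → ℝ => (∑ i, v i) / (∏ i, v i) ^ ((Fintype.card ι : ℝ)⁻¹)) 1 := by
    exact (continuous_finsetSum _ fun i _ => continuous_apply i).continuousAt.div
      ((continuous_finsetProd _ fun i _ => continuous_apply i).continuousAt.rpow_const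
        (Or.inl (by simp))) (by simp)
  exact hcont.eventually_lt_const (by simpa using hε)

theorem trace_div_norm_rpow_smul {F : Type*} [Field F] [Algebra ℚ F] [FiniteDimensional ℚ F]
    {r : ℚ} (hr : 0 < r) {y : F} (hy : 0 ≤ (Algebra.norm ℚ y : ℝ)) :
    (Algebra.trace ℚ F (r • y) : ℝ) / (Algebra.norm ℚ (r • y) : ℝ) ^ ((finrank ℚ F : ℝ)⁻¹) =
      (Algebra.trace ℚ F y : ℝ) / (Algebra.norm ℚ y : ℝ) ^ ((finrank ℚ F : ℝ)⁻¹) := by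
  have hr' : (0 : ℝ) < r := by exact_mod_cast hr
  have hnorm : (Algebra.norm ℚ (r • y) : ℝ) = (r : ℝ) ^ finrank ℚ F * Algebra.norm ℚ y := by
    rw [Algebra.smul_def, map_mul, Algebra.norm_algebraMap]
    push_cast
    rfl
  rw [map_smul, smul_eq_mul, hnorm, Real.mul_rpow (by positivity) hy,
    Real.pow_rpow_inv_natCast hr'.le finrank_pos.ne']
  push_cast
  exact mul_div_mul_left _ _ hr'.ne'

namespace NumberField.IsTotallyReal

variable {K : Type*} [Field K] [IsTotallyReal K]

noncomputable def realEmbedding (w : InfinitePlace K) : K →+* ℝ :=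
  embedding_of_isReal (IsTotallyReal.isReal w)

noncomputable def equivComplexEmbedding : InfinitePlace K ≃ (K →+* ℂ) where
  toFun := InfinitePlace.embedding
  invFun := InfinitePlace.mk
  left_inv := mk_embedding
  right_inv φ := embedding_mk_eq_of_isReal (complexEmbedding_isReal φ)

variable [NumberField K]

theorem card_infinitePlace : Fintype.card (InfinitePlace K) = finrank ℚ K :=
  (Fintype.card_congr equivComplexEmbedding).trans (Embeddings.card K ℂ)

theorem denseRange_realEmbedding :
    DenseRange fun (x : K) (w : InfinitePlace K) => realEmbedding w x := by
  let g : InfiniteAdeleRing K → InfinitePlace K → ℝ :=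
    Pi.map fun w => Completion.extensionEmbeddingOfIsReal (IsTotallyReal.isReal w)
  have hg : Continuous g := continuous_pi fun w =>
    (Completion.isometry_extensionEmbeddingOfIsReal _).continuous.comp (continuous_apply w)
  convert (Function.Surjective.piMap fun w => Completion.surjective_extensionEmbeddingOfIsReal
    (IsTotallyReal.isReal w)).denseRange.comp (InfiniteAdeleRing.denseRange_algebraMap K) hg
    using 1
  funext x w
  exact (Completion.extensionEmbeddingOfIsReal_coe _ ((WithAbs.equiv w.1).symm x)).symm

@[to_additive]
theorem prod_algHom_eq_prod_realEmbedding {M : Type*} [CommMonoid M] (f : ℂ → M) (x : K) :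
    ∏ σ : K →ₐ[ℚ] ℂ, f (σ x) = ∏ w, f (realEmbedding w x) := by
  refine Fintype.prod_equiv
    ((RingHom.equivRatAlgHom K ℂ).symm.trans equivComplexEmbedding.symm) _ _ fun σ => ?_
  simp only [Equiv.trans_apply, realEmbedding, embedding_of_isReal_apply]
  exact congrArg f (DFunLike.congr_fun
    (embedding_mk_eq_of_isReal (complexEmbedding_isReal (σ : K →+* ℂ))) x).symm

theorem ratCast_trace (x : K) : (Algebra.trace ℚ K x : ℝ) = ∑ w, realEmbedding w x := by
  apply Complex.ofReal_injective
  push_cast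
  exact (trace_eq_sum_embeddings (E := ℂ)).trans (sum_algHom_eq_sum_realEmbedding id x)

theorem ratCast_norm (x : K) : (Algebra.norm ℚ x : ℝ) = ∏ w, realEmbedding w x := by
  apply Complex.ofReal_injective
  push_cast
  exact (Algebra.norm_eq_prod_embeddings ℚ ℂ x).trans
    (prod_algHom_eq_prod_realEmbedding id x)

theorem exists_sq_mul_mem_nhds_one {α : K} (hα : ∀ w, 0 < realEmbedding w α)
    {S : Set (InfinitePlace K → ℝ)} (hS : S ∈ 𝓝 1) :
    ∃ x : K, (fun w => realEmbedding w (x ^ 2 * α)) ∈ S := by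
  let Φ (v : InfinitePlace K → ℝ) (w : InfinitePlace K) : ℝ := v w ^ 2 * realEmbedding w α
  have hΦ : Continuous Φ := continuous_pi fun w => ((continuous_apply w).pow 2).mul continuous_const
  have hΦt : Φ (fun w => (√(realEmbedding w α))⁻¹) = 1 := by
    funext w
    simp [Φ, inv_pow, Real.sq_sqrt (hα w).le, (hα w).ne']
  obtain ⟨_, ⟨x, rfl⟩, hx⟩ := denseRange_realEmbedding.inter_nhds_nonempty
    (hΦ.continuousAt.preimage_mem_nhds (hΦt ▸ hS))
  exact ⟨x, by simpa [Φ] using hx⟩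

end NumberField.IsTotallyReal

open IsTotallyReal in
/-- For any totally positive element `α` of a totally real number field `F`
of degree `n`, and any `ε > 0`, there exists a nonzero `c ∈ 𝓞 F` such that
`Tr(c²α) / N(c²α)^(1/n) < n + ε`. -/
theorem exists_trace_div_norm_rpow_lt
    (F : Type*) [Field F] [NumberField F] (n : ℕ)
    (hdeg : finrank ℚ F = n)
    (htotreal : ∀ v : InfinitePlace F, v.IsReal)
    (α : F) (hα : ∀ τ : F →+* ℝ, 0 < τ α)
    (ε : ℝ) (hε : 0 < ε) :
    ∃ c : 𝓞 F, c ≠ 0 ∧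
      ((Algebra.trace ℚ F ((c : F) ^ 2 * α) : ℝ) /
          (Algebra.norm ℚ ((c : F) ^ 2 * α) : ℝ) ^ ((n : ℝ)⁻¹) : ℝ) < n + ε := by
  have : IsTotallyReal F := ⟨htotreal⟩
  subst hdeg
  have hS := (eventually_all.2 fun w => (continuous_apply w).continuousAt.eventually_const_lt
    one_pos).and (eventually_sum_div_prod_rpow_lt (ι := InfinitePlace F) hε)
  obtain ⟨x, hx_pos, hx_lt⟩ := exists_sq_mul_mem_nhds_one (fun w => hα _) hS
  obtain ⟨m, hm, hint⟩ := ((IsFractionRing.isAlgebraic_iff ℤ ℚ F).mpr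
    (Algebra.IsAlgebraic.isAlgebraic x)).exists_integral_multiple
  have hx : x ≠ 0 := by
    rintro rfl
    simpa using hx_pos (Classical.arbitrary _)
  have hcx : (m • x) ^ 2 * α = ((m : ℚ) ^ 2) • (x ^ 2 * α) := by
    rw [zsmul_eq_mul, Algebra.smul_def, map_pow, map_intCast]
    ring
  let c : 𝓞 F := ⟨m • x, hint⟩
  have hc : (c : F) = m • x := rfl
  refine ⟨c, fun h => smul_ne_zero hm hx (hc ▸ congrArg ((↑) : 𝓞 F → F) h), ?_⟩
  have hnorm : 0 ≤ (Algebra.norm ℚ (x ^ 2 * α) : ℝ) := by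
    rw [ratCast_norm]
    exact Finset.prod_nonneg fun w _ => (hx_pos w).le
  rwa [hc, hcx, trace_div_norm_rpow_smul (by positivity) hnorm, ratCast_trace, ratCast_norm,
    ← card_infinitePlace]
end

section
/- Let B be a totally definite quaternion algebra over a totally real field F with maximal order R, let 𝔞 and 𝔟 be right R-ideals with left order R_𝔞 of 𝔞, and let 𝔭 be a prime ideal of O_F. Then the map u ↦ u⁻¹𝔞 induces a bijection between the set of orbits of R_𝔞^× (acting by left multiplication) on {u ∈ 𝔞𝔟⁻¹ : (nr(u)) = nr(𝔞)nr(𝔟)⁻¹𝔭} and the set of fractional right R-ideals 𝔠 properly containing 𝔟 such that nr(𝔟) = nr(𝔠)𝔭 and 𝔠 is isomorphic to 𝔞 as a right R-module. -/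
/-!
Every `u ∈ Θ(𝔭, 𝔞, 𝔟)` is a unit of `B`: its reduced norm is nonzero because `nr(𝔞)𝔭 ≠ 0`, and
`nr(𝔞) ≠ 0` since the reduced norm is positive definite under a real embedding of `F`. Hence
`u⁻¹𝔞` is a right `R`-ideal isomorphic to `𝔞`, the condition `u𝔟 ⊆ 𝔞` says `𝔟 ⊆ u⁻¹𝔞`, and
multiplicativity of the norm turns `(nr u) nr(𝔟) = nr(𝔞)𝔭` into `nr(𝔟) = nr(u⁻¹𝔞)𝔭`. The
inclusion is proper since multiplication by the proper ideal `𝔭` fixes no nonzero fractional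
ideal. Conversely every such `𝔠 = w⁻¹𝔞` arises from `w`, and `u⁻¹𝔞 = v⁻¹𝔞` exactly when
`vu⁻¹` and its inverse preserve `𝔞`, i.e. when `u` and `v` lie in the same `R_𝔞^×`-orbit.
-/

open NumberField Module
open scoped Quaternion nonZeroDivisors

noncomputable section

variable {F : Type*} [Field F] [NumberField F] {a b : F}

/-- The reduced norm on a quaternion algebra `(a, b / F)`. -/
def quatNorm (x : ℍ[F, a, b]) : F :=
  (x * star x).re

/-- The reduced norm ideal of a subset of a quaternion algebra: the `𝓞 F`-submodule of `F`
generated by the reduced norms of its elements. -/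
def nrIdeal (S : Set ℍ[F, a, b]) : Submodule (𝓞 F) F :=
  Submodule.span (𝓞 F) (quatNorm '' S)

/-- The image of an ideal `𝔭` of `𝓞 F` in `F`, as an `𝓞 F`-submodule of `F`. -/
def idealToSubmodule (𝔭 : Ideal (𝓞 F)) : Submodule (𝓞 F) F :=
  Submodule.map (Algebra.linearMap (𝓞 F) F) 𝔭

/-- The left order of a subset `𝔞` of an algebra: `R_𝔞 = {x : x𝔞 ⊆ 𝔞}`. -/
def leftOrder {B : Type*} [Ring B] (𝔞 : Set B) : Set B :=
  {x : B | ∀ y ∈ 𝔞, x * y ∈ 𝔞}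

/-- `S` is a (fractional) right ideal for a subring `R` of the quaternion algebra:
it is an additive subgroup, stable under right multiplication by `R`, finitely generated,
and spans the quaternion algebra over `F`. -/
def IsRightIdeal (R : Subring ℍ[F, a, b]) (A : AddSubgroup ℍ[F, a, b]) : Prop :=
  (∀ x ∈ A, ∀ r ∈ R, x * r ∈ A) ∧ A.FG ∧ Submodule.span F (A : Set ℍ[F, a, b]) = ⊤

/-- `R` is an `𝓞 F`-order in the quaternion algebra: a subring containing `𝓞 F` which is a
finitely generated full lattice. -/
def IsOrder (R : Subring ℍ[F, a, b]) : Prop :=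
  (∀ x : 𝓞 F, algebraMap F ℍ[F, a, b] (x : F) ∈ R) ∧ R.toAddSubgroup.FG ∧
    Submodule.span F (R : Set ℍ[F, a, b]) = ⊤

/-- `R` is a maximal order in the quaternion algebra. -/
def IsMaximalOrder (R : Subring ℍ[F, a, b]) : Prop :=
  IsOrder R ∧ ∀ R' : Subring ℍ[F, a, b], IsOrder R' → R ≤ R' → R' = R

/-- The set `Θ(𝔭, 𝔞, 𝔟) = {u ∈ 𝔞𝔟⁻¹ : (nr u) = nr(𝔞)nr(𝔟)⁻¹𝔭}`, where membership
`u ∈ 𝔞𝔟⁻¹` is expressed as `u𝔟 ⊆ 𝔞` and the reduced norm condition is written in the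
(equivalent) multiplied-out form `(nr u)·nr(𝔟) = nr(𝔞)·𝔭`. -/
def Theta (𝔞 𝔟 : AddSubgroup ℍ[F, a, b]) (𝔭 : Ideal (𝓞 F)) : Type _ :=
  {u : ℍ[F, a, b] // (∀ x ∈ 𝔟, u * x ∈ 𝔞) ∧
    Submodule.span (𝓞 F) {quatNorm u} * nrIdeal (𝔟 : Set ℍ[F, a, b]) =
      nrIdeal (𝔞 : Set ℍ[F, a, b]) * idealToSubmodule 𝔭}

/-- The equivalence relation on `Θ(𝔭, 𝔞, 𝔟)` given by left multiplication by units of the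
left order `R_𝔞`. -/
def thetaSetoid (𝔞 𝔟 : AddSubgroup ℍ[F, a, b]) (𝔭 : Ideal (𝓞 F)) :
    Setoid (Theta 𝔞 𝔟 𝔭) where
  r u v := ∃ γ : (ℍ[F, a, b])ˣ,
    (↑γ : ℍ[F, a, b]) ∈ leftOrder (𝔞 : Set ℍ[F, a, b]) ∧
    (↑γ⁻¹ : ℍ[F, a, b]) ∈ leftOrder (𝔞 : Set ℍ[F, a, b]) ∧
    v.1 = ↑γ * u.1
  iseqv := by
    constructor
    · exact fun u => ⟨1, fun y hy => by simpa, fun y hy => by simpa, by simp⟩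
    · rintro u v ⟨γ, h1, h2, hv⟩
      exact ⟨γ⁻¹, h2, by simpa, by rw [hv, ← mul_assoc]; simp⟩
    · rintro u v w ⟨γ, h1, h2, hv⟩ ⟨δ, k1, k2, hw⟩
      refine ⟨δ * γ, fun y hy => ?_, fun y hy => ?_, ?_⟩
      · rw [Units.val_mul, mul_assoc]; exact k1 _ (h1 _ hy)
      · rw [mul_inv_rev, Units.val_mul, mul_assoc]; exact h2 _ (k2 _ hy)
      · rw [hw, hv, Units.val_mul, mul_assoc]

end

open scoped Pointwise

lemma mul_coeSubmodule_ne_self {R K : Type*} [CommRing R] [IsDedekindDomain R] [Field K]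
    [Algebra R K] [IsFractionRing R K] {M : Submodule R K} (hM : IsFractional R⁰ M)
    (hM0 : M ≠ ⊥) {I : Ideal R} (hI : I ≠ ⊤) : M * IsLocalization.coeSubmodule K I ≠ M := by
  intro h
  let J : FractionalIdeal R⁰ K := ⟨M, hM⟩
  have hJ0 : J ≠ 0 := fun h0 =>
    hM0 ((congrArg ((↑) : FractionalIdeal R⁰ K → Submodule R K) h0).trans FractionalIdeal.coe_zero)
  have hJI : J * I = J * 1 := by
    rw [mul_one]
    exact FractionalIdeal.coeToSubmodule_injective
      (show ((J * I : FractionalIdeal R⁰ K) : Submodule R K) = J by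
        rw [FractionalIdeal.coe_mul, FractionalIdeal.coe_coeIdeal]; exact h)
  exact hI (by simpa using mul_left_cancel₀ hJ0 hJI)

lemma preimage_mul_left_eq_image_inv {M : Type*} [Monoid M] (w : Mˣ) (s : Set M) :
    ((w : M) * ·) ⁻¹' s = ((↑w⁻¹ : M) * ·) '' s :=
  (congrFun (Set.image_eq_preimage_of_inverse w.mul_inv_cancel_left w.inv_mul_cancel_left) s).symm

lemma mul_inv_mem_leftOrder {B : Type*} [Ring B] {s : Set B} {u v : Bˣ}
    (h : ((u : B) * ·) ⁻¹' s ⊆ ((v : B) * ·) ⁻¹' s) : (↑(v * u⁻¹) : B) ∈ leftOrder s := by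
  intro y hy
  have hy' : (u : B) * (↑u⁻¹ * y) ∈ s := by rwa [Units.mul_inv_cancel_left]
  simpa only [Units.val_mul, mul_assoc, Set.mem_preimage] using h hy'

lemma preimage_mul_left_eq_iff {B : Type*} [Ring B] (s : Set B) {u v : B} (hu : IsUnit u)
    (hv : IsUnit v) :
    (u * ·) ⁻¹' s = (v * ·) ⁻¹' s ↔
      ∃ γ : Bˣ, (γ : B) ∈ leftOrder s ∧ (↑γ⁻¹ : B) ∈ leftOrder s ∧ v = γ * u := by
  constructor
  · intro h
    refine ⟨hv.unit * hu.unit⁻¹, mul_inv_mem_leftOrder h.le, ?_, ?_⟩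
    · rw [mul_inv_rev, inv_inv]
      exact mul_inv_mem_leftOrder h.ge
    · rw [Units.val_mul, mul_assoc, IsUnit.val_inv_mul, mul_one, IsUnit.unit_spec]
  · rintro ⟨γ, hγ, hγinv, rfl⟩
    ext x
    simp only [Set.mem_preimage, mul_assoc]
    exact ⟨fun hx => hγ _ hx, fun hx => by simpa only [Units.inv_mul_cancel_left] using hγinv _ hx⟩

section QuaternionAlgebra

variable {F : Type*} [Field F] {a b : F}

lemma quatNorm_eq (x : ℍ[F, a, b]) :
    quatNorm x = x.re * x.re - a * (x.imI * x.imI) - b * (x.imJ * x.imJ) +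
      a * b * (x.imK * x.imK) := by
  simp [quatNorm, QuaternionAlgebra.re_mul]; ring

def quatNormHom : ℍ[F, a, b] →* F where
  toFun := quatNorm
  map_one' := by simp [quatNorm_eq]
  map_mul' x y := by
    simp only [quatNorm_eq, QuaternionAlgebra.re_mul, QuaternionAlgebra.imI_mul,
      QuaternionAlgebra.imJ_mul, QuaternionAlgebra.imK_mul]
    ring

lemma quatNorm_mul (x y : ℍ[F, a, b]) : quatNorm (x * y) = quatNorm x * quatNorm y :=
  quatNormHom.map_mul x y

lemma mul_star_eq_quatNorm (x : ℍ[F, a, b]) : x * star x = quatNorm x :=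
  QuaternionAlgebra.mul_star_eq_coe x

lemma star_mul_eq_quatNorm (x : ℍ[F, a, b]) : star x * x = quatNorm x := by
  rw [star_comm_self', mul_star_eq_quatNorm]

lemma isUnit_iff_quatNorm_ne_zero {x : ℍ[F, a, b]} : IsUnit x ↔ quatNorm x ≠ 0 := by
  refine ⟨fun hx => (hx.map quatNormHom).ne_zero, fun hx => ?_⟩
  have hinv : (quatNorm x)⁻¹ • ((quatNorm x : F) : ℍ[F, a, b]) = 1 := by
    rw [QuaternionAlgebra.smul_coe, inv_mul_cancel₀ hx, QuaternionAlgebra.coe_one]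
  exact ⟨⟨x, (quatNorm x)⁻¹ • star x, by rw [mul_smul_comm, mul_star_eq_quatNorm, hinv],
    by rw [smul_mul_assoc, star_mul_eq_quatNorm, hinv]⟩, rfl⟩

lemma quatNorm_pos_of_ringHom {K : Type*} [Field K] [LinearOrder K] [IsStrictOrderedRing K]
    (τ : F →+* K) (ha : τ a < 0) (hb : τ b < 0) {x : ℍ[F, a, b]} (hx : x ≠ 0) :
    0 < τ (quatNorm x) := by
  have hab : 0 < τ a * τ b := mul_pos_of_neg_of_neg ha hb
  have hcomp : τ x.re ≠ 0 ∨ τ x.imI ≠ 0 ∨ τ x.imJ ≠ 0 ∨ τ x.imK ≠ 0 := by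
    simp only [map_ne_zero]
    by_contra! h
    exact hx (QuaternionAlgebra.ext h.1 h.2.1 h.2.2.1 h.2.2.2)
  rw [quatNorm_eq]
  simp only [map_add, map_sub, map_mul]
  rcases hcomp with h | h | h | h
  all_goals
    have := mul_self_pos.2 h
    nlinarith [mul_self_nonneg (τ x.re), mul_self_nonneg (τ x.imI), mul_self_nonneg (τ x.imJ),
      mul_self_nonneg (τ x.imK)]

lemma nrIdeal_image_mul_left (c : ℍ[F, a, b]) (S : Set ℍ[F, a, b]) :
    nrIdeal ((c * ·) '' S) = Submodule.span (𝓞 F) {quatNorm c} * nrIdeal S := by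
  rw [nrIdeal, nrIdeal, Submodule.span_mul_span, Set.singleton_mul, Set.image_image,
    Set.image_image]
  simp only [quatNorm_mul]

lemma nrIdeal_eq_span_mul_preimage {w : ℍ[F, a, b]} (hw : IsUnit w) (S : Set ℍ[F, a, b]) :
    nrIdeal S = Submodule.span (𝓞 F) {quatNorm w} * nrIdeal ((w * ·) ⁻¹' S) := by
  have hsurj : Function.Surjective (w * ·) := hw.unit.mulLeft_bijective.surjective
  rw [← nrIdeal_image_mul_left, Set.image_preimage_eq S hsurj]

lemma nrIdeal_eq_preimage_mul_iff {w : ℍ[F, a, b]} (hw : IsUnit w) (S T : Set ℍ[F, a, b])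
    (P : Submodule (𝓞 F) F) :
    nrIdeal T = nrIdeal ((w * ·) ⁻¹' S) * P ↔
      Submodule.span (𝓞 F) {quatNorm w} * nrIdeal T = nrIdeal S * P := by
  rw [nrIdeal_eq_span_mul_preimage hw S, mul_assoc, Submodule.span_singleton_mul,
    Submodule.span_singleton_mul]
  exact (MulAction.injective₀ (isUnit_iff_quatNorm_ne_zero.1 hw)).eq_iff.symm

lemma nrIdeal_ne_bot {K : Type*} [Field K] [LinearOrder K] [IsStrictOrderedRing K]
    (τ : F →+* K) (ha : τ a < 0) (hb : τ b < 0) {S : Set ℍ[F, a, b]}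
    (hS : Submodule.span F S = ⊤) : nrIdeal S ≠ ⊥ := by
  obtain ⟨x, hxS, hx⟩ : ∃ x ∈ S, x ≠ 0 := by
    by_contra! h
    exact top_ne_bot (hS ▸ Submodule.span_eq_bot.2 h)
  rw [nrIdeal, Ne, Submodule.span_eq_bot]
  exact fun h => (quatNorm_pos_of_ringHom τ ha hb hx).ne' (by rw [h _ ⟨x, hxS, rfl⟩, map_zero])

/-- For `A = ⟨S⟩`, every `nr x = re (x * star x)` lies in the `re`-image of the finitely
generated `ℤ`-module `⟨S⟩ * ⟨star S⟩`. -/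
lemma nrIdeal_isFractional [NumberField F] {A : AddSubgroup ℍ[F, a, b]} (hA : A.FG) :
    IsFractional (𝓞 F)⁰ (nrIdeal (A : Set ℍ[F, a, b])) := by
  obtain ⟨S, rfl⟩ := hA
  obtain ⟨T, hT⟩ := ((Submodule.fg_span S.finite_toSet).mul
    (Submodule.fg_span (S.finite_toSet.image star))).map
    ((QuaternionAlgebra.reₗ a 0 b).restrictScalars ℤ)
  refine FractionalIdeal.isFractional_of_le (J := ⟨Submodule.span (𝓞 F) T,
    FractionalIdeal.isFractional_of_fg (Submodule.fg_span T.finite_toSet)⟩) ?_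
  rw [nrIdeal, Submodule.span_le]
  rintro _ ⟨x, hx, rfl⟩
  refine Submodule.span_le_restrictScalars ℤ (𝓞 F) _
    (hT ▸ ⟨x * star x, Submodule.mul_mem_mul ?_ ?_, rfl⟩)
  · exact AddSubgroup.closure_le (Submodule.span ℤ _).toAddSubgroup |>.2 Submodule.subset_span hx
  · induction hx using AddSubgroup.closure_induction with
    | mem y hy => exact Submodule.subset_span ⟨y, hy, rfl⟩
    | zero => simp
    | add y z _ _ hy hz => rw [star_add]; exact add_mem hy hz
    | neg y _ hy => rw [star_neg]; exact neg_mem hy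

lemma IsRightIdeal.map_mulLeft {R : Subring ℍ[F, a, b]} {A : AddSubgroup ℍ[F, a, b]}
    (hA : IsRightIdeal R A) (c : (ℍ[F, a, b])ˣ) :
    IsRightIdeal R (A.map (AddMonoidHom.mulLeft (c : ℍ[F, a, b]))) := by
  classical
  obtain ⟨hmul, ⟨S, hS⟩, hspan⟩ := hA
  refine ⟨?_, ⟨S.image (c * ·), ?_⟩, ?_⟩
  · rintro _ ⟨x, hx, rfl⟩ r hr
    exact ⟨x * r, hmul x hx r hr, (mul_assoc _ _ _).symm⟩
  · rw [Finset.coe_image, ← hS, AddMonoidHom.map_closure]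
    rfl
  · rw [AddSubgroup.coe_map]
    change Submodule.span F (LinearMap.mulLeft F (c : ℍ[F, a, b]) '' A) = ⊤
    rw [Submodule.span_image, hspan, Submodule.map_top, LinearMap.range_eq_top]
    exact c.mulLeft_bijective.surjective

def IsNeighbourInClass (R : Subring ℍ[F, a, b]) (𝔞 𝔟 : AddSubgroup ℍ[F, a, b])
    (𝔭 : Ideal (𝓞 F)) (𝔠 : Set ℍ[F, a, b]) : Prop :=
  (∃ A : AddSubgroup ℍ[F, a, b], (A : Set ℍ[F, a, b]) = 𝔠 ∧ IsRightIdeal R A) ∧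
    (𝔟 : Set ℍ[F, a, b]) ⊂ 𝔠 ∧
    nrIdeal (𝔟 : Set ℍ[F, a, b]) = nrIdeal 𝔠 * idealToSubmodule 𝔭 ∧
    ∃ w : (ℍ[F, a, b])ˣ, 𝔠 = (fun y => (↑w⁻¹ : ℍ[F, a, b]) * y) '' (𝔞 : Set ℍ[F, a, b])

lemma IsNeighbourInClass.exists_eq_preimage {R : Subring ℍ[F, a, b]}
    {𝔞 𝔟 : AddSubgroup ℍ[F, a, b]} {𝔭 : Ideal (𝓞 F)} {𝔠 : Set ℍ[F, a, b]}
    (h : IsNeighbourInClass R 𝔞 𝔟 𝔭 𝔠) :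
    ∃ w : (ℍ[F, a, b])ˣ, 𝔠 = ((w : ℍ[F, a, b]) * ·) ⁻¹' (𝔞 : Set ℍ[F, a, b]) := by
  obtain ⟨w, rfl⟩ := h.2.2.2
  exact ⟨w, (preimage_mul_left_eq_image_inv w _).symm⟩

lemma isNeighbourInClass_preimage_iff [NumberField F] {R : Subring ℍ[F, a, b]}
    {𝔞 𝔟 : AddSubgroup ℍ[F, a, b]} {𝔭 : Ideal (𝓞 F)} (h𝔞 : IsRightIdeal R 𝔞)
    (hnr : nrIdeal (𝔞 : Set ℍ[F, a, b]) ≠ ⊥) (h𝔭 : 𝔭 ≠ ⊤) {w : ℍ[F, a, b]} (hw : IsUnit w) :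
    IsNeighbourInClass R 𝔞 𝔟 𝔭 ((w * ·) ⁻¹' 𝔞) ↔
      (∀ x ∈ 𝔟, w * x ∈ 𝔞) ∧
        Submodule.span (𝓞 F) {quatNorm w} * nrIdeal (𝔟 : Set ℍ[F, a, b]) =
          nrIdeal (𝔞 : Set ℍ[F, a, b]) * idealToSubmodule 𝔭 := by
  have himage : (w * ·) ⁻¹' (𝔞 : Set ℍ[F, a, b]) =
      ((↑hw.unit⁻¹ : ℍ[F, a, b]) * ·) '' (𝔞 : Set ℍ[F, a, b]) :=
    preimage_mul_left_eq_image_inv hw.unit _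
  have hnorm := nrIdeal_eq_preimage_mul_iff hw 𝔞 𝔟 (idealToSubmodule 𝔭)
  constructor
  · rintro ⟨-, hsub, hnr𝔟, -⟩
    exact ⟨fun x hx => hsub.1 hx, hnorm.1 hnr𝔟⟩
  · rintro ⟨hsub, hnr𝔟⟩
    refine ⟨⟨_, himage ▸ AddSubgroup.coe_map _ _, h𝔞.map_mulLeft hw.unit⁻¹⟩,
      Set.ssubset_iff_subset_ne.2 ⟨hsub, fun heq => ?_⟩, hnorm.2 hnr𝔟, hw.unit, himage⟩
    -- `𝔟 = w⁻¹𝔞` would turn the norm equation into `nr(𝔞)𝔭 = nr(𝔞)`.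
    refine mul_coeSubmodule_ne_self (nrIdeal_isFractional h𝔞.2.1) hnr h𝔭 ?_
    change nrIdeal (𝔞 : Set ℍ[F, a, b]) * idealToSubmodule 𝔭 = _
    rw [← hnr𝔟, heq, ← nrIdeal_eq_span_mul_preimage hw]

lemma Theta.isUnit_val [NumberField F] {𝔞 𝔟 : AddSubgroup ℍ[F, a, b]} {𝔭 : Ideal (𝓞 F)}
    (u : Theta 𝔞 𝔟 𝔭) (hnr : nrIdeal (𝔞 : Set ℍ[F, a, b]) ≠ ⊥) (h𝔭 : 𝔭 ≠ ⊥) :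
    IsUnit u.1 := by
  rw [isUnit_iff_quatNorm_ne_zero]
  intro h0
  have hu := u.2.2
  rw [h0, Submodule.span_zero_singleton, Submodule.bot_mul, eq_comm, Submodule.mul_eq_bot] at hu
  refine hu.elim hnr fun h => h𝔭 (IsFractionRing.coeSubmodule_injective (𝓞 F) F ?_)
  rw [IsLocalization.coeSubmodule_bot]
  exact h

end QuaternionAlgebra

variable {F : Type*} [Field F] [NumberField F] {a b : F}

theorem theta_orbits_equiv_ideals_general
    (htot : ∀ v : InfinitePlace F, v.IsReal)
    (hdef : ∀ τ : F →+* ℝ, τ a < 0 ∧ τ b < 0)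
    (R : Subring ℍ[F, a, b])
    (𝔞 𝔟 : AddSubgroup ℍ[F, a, b])
    (h𝔞 : IsRightIdeal R 𝔞)
    (𝔭 : Ideal (𝓞 F)) (h𝔭 : 𝔭.IsPrime) (h𝔭0 : 𝔭 ≠ ⊥) :
    ∃ e : Quotient (thetaSetoid 𝔞 𝔟 𝔭) ≃
        {𝔠 : Set ℍ[F, a, b] //
          (∃ A : AddSubgroup ℍ[F, a, b], (A : Set ℍ[F, a, b]) = 𝔠 ∧ IsRightIdeal R A) ∧
          (𝔟 : Set ℍ[F, a, b]) ⊂ 𝔠 ∧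
          nrIdeal (𝔟 : Set ℍ[F, a, b]) = nrIdeal 𝔠 * idealToSubmodule 𝔭 ∧
          (∃ w : (ℍ[F, a, b])ˣ,
            𝔠 = (fun y => (↑w⁻¹ : ℍ[F, a, b]) * y) '' (𝔞 : Set ℍ[F, a, b]))},
      ∀ u : Theta 𝔞 𝔟 𝔭,
        (e (Quotient.mk (thetaSetoid 𝔞 𝔟 𝔭) u)).1 =
          {x : ℍ[F, a, b] | u.1 * x ∈ 𝔞} := by
  obtain ⟨v⟩ : Nonempty (InfinitePlace F) := inferInstance
  set τ := InfinitePlace.embedding_of_isReal (htot v)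
  have hnr𝔞 : nrIdeal (𝔞 : Set ℍ[F, a, b]) ≠ ⊥ := nrIdeal_ne_bot τ (hdef τ).1 (hdef τ).2 h𝔞.2.2
  have hunit (u : Theta 𝔞 𝔟 𝔭) : IsUnit u.1 := u.isUnit_val hnr𝔞 h𝔭0
  have hneighbour {w : ℍ[F, a, b]} (hw : IsUnit w) :=
    isNeighbourInClass_preimage_iff (𝔟 := 𝔟) h𝔞 hnr𝔞 h𝔭.ne_top hw
  let f (u : Theta 𝔞 𝔟 𝔭) : {𝔠 // IsNeighbourInClass R 𝔞 𝔟 𝔭 𝔠} :=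
    ⟨(u.1 * ·) ⁻¹' 𝔞, (hneighbour (hunit u)).2 u.2⟩
  have hf (u v : Theta 𝔞 𝔟 𝔭) : f u = f v ↔ thetaSetoid 𝔞 𝔟 𝔭 u v :=
    Subtype.ext_iff.trans (preimage_mul_left_eq_iff _ (hunit u) (hunit v))
  refine ⟨Equiv.ofBijective (Quotient.lift f fun u v => (hf u v).2) ⟨?_, ?_⟩, fun u => rfl⟩
  · rintro ⟨u⟩ ⟨v⟩ h
    exact Quotient.sound ((hf u v).1 h)
  · rintro ⟨𝔠, h𝔠⟩
    obtain ⟨w, rfl⟩ := IsNeighbourInClass.exists_eq_preimage h𝔠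
    exact ⟨Quotient.mk _ ⟨w, (hneighbour w.isUnit).1 h𝔠⟩, rfl⟩

/-- Let `B` be a totally definite quaternion algebra over a totally real
number field `F`, `R` a maximal order, `𝔞`, `𝔟` right `R`-ideals, and `𝔭` a nonzero prime of
`𝓞 F`.  Then `u ↦ u⁻¹𝔞` induces a bijection between the orbits of `R_𝔞^×` on
`Θ(𝔭, 𝔞, 𝔟) = {u ∈ 𝔞𝔟⁻¹ : (nr u) = nr(𝔞)nr(𝔟)⁻¹𝔭}` and the set of fractional right
`R`-ideals `𝔠` properly containing `𝔟` with `nr(𝔟) = nr(𝔠)𝔭` and `𝔠 ≅ 𝔞` as right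
`R`-modules (i.e. `𝔠 = w⁻¹𝔞` for a unit `w`). -/
theorem theta_orbits_equiv_ideals
    (htot : ∀ v : InfinitePlace F, v.IsReal)
    (hdef : ∀ τ : F →+* ℝ, τ a < 0 ∧ τ b < 0)
    (R : Subring ℍ[F, a, b]) (hR : IsMaximalOrder R)
    (𝔞 𝔟 : AddSubgroup ℍ[F, a, b])
    (h𝔞 : IsRightIdeal R 𝔞) (h𝔟 : IsRightIdeal R 𝔟)
    (𝔭 : Ideal (𝓞 F)) (h𝔭 : 𝔭.IsPrime) (h𝔭0 : 𝔭 ≠ ⊥) :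
    ∃ e : Quotient (thetaSetoid 𝔞 𝔟 𝔭) ≃
        {𝔠 : Set ℍ[F, a, b] //
          (∃ A : AddSubgroup ℍ[F, a, b], (A : Set ℍ[F, a, b]) = 𝔠 ∧ IsRightIdeal R A) ∧
          (𝔟 : Set ℍ[F, a, b]) ⊂ 𝔠 ∧
          nrIdeal (𝔟 : Set ℍ[F, a, b]) = nrIdeal 𝔠 * idealToSubmodule 𝔭 ∧
          (∃ w : (ℍ[F, a, b])ˣ,
            𝔠 = (fun y => (↑w⁻¹ : ℍ[F, a, b]) * y) '' (𝔞 : Set ℍ[F, a, b]))},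
      ∀ u : Theta 𝔞 𝔟 𝔭,
        (e (Quotient.mk (thetaSetoid 𝔞 𝔟 𝔭) u)).1 =
          {x : ℍ[F, a, b] | u.1 * x ∈ 𝔞} :=
  theta_orbits_equiv_ideals_general htot hdef R 𝔞 𝔟 h𝔞 𝔭 h𝔭 h𝔭0
end

section
/- For the real quadratic field F = ℚ(√10), the prime 2 ramifies as (2) = 𝔭² with 𝔭 = (2, √10) nonprincipal, and the class group of F has order 2, generated by the class of 𝔭. -/
open NumberField Module
open scoped nonZeroDivisors

section helpers

variable {R S : Type*} [CommRing R] [CommRing S] [Algebra R S]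

lemma leftMulMatrix_eq_aux (B : Basis (Fin 2) R S) (w : S) (hB0 : B 0 = 1) (hB1 : B 1 = w)
    (hw : w * w = 10) (a b : R) :
    Algebra.leftMulMatrix B (a • (1:S) + b • w) = !![a, 10*b; b, a] := by
  have h10 : (10 : S) = (10 : R) • (1 : S) := by
    rw [← Algebra.algebraMap_eq_smul_one, map_ofNat]
  have key0 : (a • (1:S) + b • w) * B 0 = a • B 0 + b • B 1 := by
    rw [hB0, hB1, mul_one]
  have key1 : (a • (1:S) + b • w) * B 1 = (10*b) • B 0 + a • B 1 := by
    rw [hB0, hB1, add_mul, smul_mul_assoc, smul_mul_assoc, one_mul, hw, h10,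
      smul_smul, mul_comm b 10, add_comm]
  ext i j
  rw [Algebra.leftMulMatrix_eq_repr_mul]
  fin_cases j <;> fin_cases i <;>
    simp [key0, key1, B.repr_self, Finsupp.single_apply]

lemma norm_form_aux (B : Basis (Fin 2) R S) (w : S) (hB0 : B 0 = 1) (hB1 : B 1 = w)
    (hw : w * w = 10) (a b : R) :
    Algebra.norm R (a • (1:S) + b • w) = a^2 - 10*b^2 := by
  rw [Algebra.norm_eq_matrix_det B, leftMulMatrix_eq_aux B w hB0 hB1 hw,
    Matrix.det_fin_two_of]
  ring

lemma trace_form_aux (B : Basis (Fin 2) R S) (w : S) (hB0 : B 0 = 1) (hB1 : B 1 = w)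
    (hw : w * w = 10) (a b : R) :
    Algebra.trace R S (a • (1:S) + b • w) = 2*a := by
  rw [Algebra.trace_eq_matrix_trace B, leftMulMatrix_eq_aux B w hB0 hB1 hw]
  simp [Matrix.trace_fin_two_of]
  ring

end helpers

lemma odd_sq_contra (t v n : ℤ) (h : t^2 = 4*n + 10*v^2) (hv : Odd v) : False := by
  obtain ⟨k, rfl⟩ := hv
  rcases Int.even_or_odd t with ⟨j, rfl⟩ | ⟨j, rfl⟩
  · have h' : 4*j^2 = 4*n + 40*k^2 + 40*k + 10 := by linear_combination h
    generalize j^2 = J at h'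
    generalize k^2 = K at h'
    omega
  · have h' : 4*j^2 + 4*j + 1 = 4*n + 40*k^2 + 40*k + 10 := by linear_combination h
    generalize j^2 = J at h'
    generalize k^2 = K at h'
    omega

lemma rat_int_lemma (a b : ℚ) (t n : ℤ) (ht : (t:ℚ) = 2*a) (hn : (n:ℚ) = a^2 - 10*b^2) :
    ∃ a' b' : ℤ, (a':ℚ) = a ∧ (b':ℚ) = b := by
  have hd0 : (b.den:ℚ) ≠ 0 := by exact_mod_cast b.den_ne_zero
  have hbq : (b.num:ℚ) = b * b.den := by
    have h := Rat.num_div_den b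
    rw [div_eq_iff hd0] at h
    exact h
  have hZ : (t^2 - 4*n) * (b.den:ℤ)^2 = 40 * b.num^2 := by
    have : ((t:ℚ)^2 - 4*n) * (b.den:ℚ)^2 = 40 * (b.num:ℚ)^2 := by
      linear_combination ((b.den:ℚ)^2) * (((t:ℚ) + 2*a) * ht - 4*hn)
        - 40*((b.num:ℚ) + b*b.den)*hbq
    exact_mod_cast this
  have hdvd : (b.den:ℕ)^2 ∣ 40 := by
    have h1 : ((b.den:ℤ))^2 ∣ 40 * b.num^2 := ⟨t^2-4*n, by linarith [hZ]⟩
    have h2 : (b.den:ℕ)^2 ∣ 40 * b.num.natAbs^2 := by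
      have := Int.natAbs_dvd_natAbs.mpr h1
      simpa [Int.natAbs_mul, Int.natAbs_pow] using this
    exact Nat.Coprime.dvd_of_dvd_mul_right (Nat.Coprime.pow 2 2 b.reduced.symm) h2
  have hden : b.den = 1 ∨ b.den = 2 := by
    have hle : b.den ≤ 6 := by nlinarith [Nat.le_of_dvd (by norm_num) hdvd]
    have hpos : 0 < b.den := b.pos
    interval_cases h : b.den <;> revert hdvd <;> decide
  obtain ⟨v, hv⟩ : ∃ v : ℤ, (v:ℚ) = 2*b := by
    rcases hden with h | h
    · refine ⟨2*b.num, ?_⟩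
      have hb1 : (b.num:ℚ) = b := by rw [hbq, h]; norm_num
      push_cast
      rw [hb1]
    · exact ⟨b.num, by rw [hbq, h]; push_cast; ring⟩
  have hveq : t^2 = 4*n + 10*v^2 := by
    have : ((t:ℚ))^2 = 4*n + 10*(v:ℚ)^2 := by
      rw [ht, hn, hv]; ring
    exact_mod_cast this
  have hveven : Even v := by
    by_contra hodd
    exact odd_sq_contra t v n hveq (Int.not_even_iff_odd.mp hodd)
  obtain ⟨b', rfl⟩ : ∃ b', v = 2*b' := by obtain ⟨c, hc⟩ := hveven; exact ⟨c, by omega⟩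
  have hb' : (b':ℚ) = b := by
    have : (2:ℚ) * b' = 2 * b := by rw [← hv]; push_cast; ring
    linarith
  have hteven : Even t := by
    have h4 : t^2 = 4*(n + 10*b'^2) := by linarith [hveq]
    have : Even (t^2) := ⟨2*(n+10*b'^2), by linarith⟩
    exact (Int.even_pow.mp this).1
  obtain ⟨a', rfl⟩ : ∃ a', t = 2*a' := by obtain ⟨c, hc⟩ := hteven; exact ⟨c, by omega⟩
  have ha' : (a':ℚ) = a := by
    have : (2:ℚ) * a' = 2 * a := by rw [← ht]; push_cast; ring
    linarith
  exact ⟨a', b', ha', hb'⟩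

lemma absNorm_mul_eq {S : Type*} [CommRing S] [IsDedekindDomain S] [Module.Free ℤ S]
    [Infinite S] [Module.Finite ℤ S] (I J : Ideal S) :
    Ideal.absNorm (I*J) = Ideal.absNorm I * Ideal.absNorm J :=
  map_mul Ideal.absNorm I J

lemma conj_sq_aux (z : ℂ) (hz : z * z = 10) : (starRingEnd ℂ) z = z := by
  have h1 : (z*z).im = 0 := by rw [hz]; simp
  have h2 : (z*z).re = 10 := by rw [hz]; simp
  rw [Complex.mul_im] at h1
  rw [Complex.mul_re] at h2
  have h3 : z.re * z.im = 0 := by linarith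
  rcases mul_eq_zero.mp h3 with h | h
  · exfalso; rw [h] at h2; nlinarith [sq_nonneg z.im]
  · exact Complex.conj_eq_iff_im.mpr h

lemma ten_not_sq (q : ℚ) (hq : q^2 = 10) : False := by
  have hd0 : (q.den:ℚ) ≠ 0 := by exact_mod_cast q.den_ne_zero
  have hbq : (q.num:ℚ) = q * q.den := by
    have h := Rat.num_div_den q
    rw [div_eq_iff hd0] at h
    exact h
  have h1 : q.num^2 = 10 * (q.den:ℤ)^2 := by
    have : (q.num:ℚ)^2 = 10 * (q.den:ℚ)^2 := by
      rw [hbq]; ring_nf; rw [mul_comm]; nlinarith [hq]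
    exact_mod_cast this
  have h2 : (2:ℤ) ∣ q.num := by
    have : (2:ℤ) ∣ q.num^2 := ⟨5*q.den^2, by linarith⟩
    exact Int.Prime.dvd_pow' Nat.prime_two this
  obtain ⟨m, hm⟩ := h2
  have h3 : 5 * (q.den:ℤ)^2 = 2 * m^2 := by rw [hm] at h1; linarith
  have h4 : (2:ℤ) ∣ (q.den:ℤ) := by
    have h5 : (2:ℤ) ∣ 5 * (q.den:ℤ)^2 := ⟨m^2, h3⟩
    rcases (Int.Prime.dvd_mul' Nat.prime_two h5) with h | h
    · norm_num at h
    · exact Int.Prime.dvd_pow' Nat.prime_two h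
  have hn2 : 2 ∣ q.num.natAbs := by
    rw [hm, Int.natAbs_mul]; exact Dvd.intro _ rfl
  have hd2 : 2 ∣ q.den := Int.ofNat_dvd.mp (by exact_mod_cast h4)
  have := q.reduced
  rw [Nat.Coprime] at this
  have h6 : 2 ∣ Nat.gcd q.num.natAbs q.den := Nat.dvd_gcd hn2 hd2
  rw [this] at h6
  norm_num at h6

set_option maxHeartbeats 4000000 in
set_option synthInstance.maxHeartbeats 400000 in
/-- In `F = ℚ(√10)`, the prime `2` ramifies as `(2) = 𝔭²` with
`𝔭 = (2, √10)` prime and nonprincipal, and the class group of `F` has order `2`,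
generated by the class of `𝔭`. -/
theorem two_ramifies_sqrt10_and_classGroup
    (F : Type*) [Field F] [NumberField F]
    (s : 𝓞 F) (hs : s ^ 2 = 10) (hdeg : finrank ℚ F = 2) :
    (Ideal.span {(2 : 𝓞 F), s}).IsPrime ∧
      Ideal.span {(2 : 𝓞 F)} = Ideal.span {(2 : 𝓞 F), s} ^ 2 ∧
      (¬ ∃ x : 𝓞 F, Ideal.span {(2 : 𝓞 F), s} = Ideal.span {x}) ∧
      Nat.card (ClassGroup (𝓞 F)) = 2 ∧
      ∃ hne : Ideal.span {(2 : 𝓞 F), s} ∈ (Ideal (𝓞 F))⁰,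
        ∀ C : ClassGroup (𝓞 F),
          C ∈ Subgroup.zpowers (ClassGroup.mk0 ⟨Ideal.span {(2 : 𝓞 F), s}, hne⟩) := by
  classical
  set P : Ideal (𝓞 F) := Ideal.span {(2 : 𝓞 F), s} with hPdef
  have hss : s * s = (10:𝓞 F) := by rw [← sq, hs]
  set t : F := algebraMap (𝓞 F) F s with htdef
  have ht2 : t * t = (10:F) := by
    rw [htdef, ← map_mul, hss, map_ofNat]
  -- t is not rational
  have htirr : ∀ q : ℚ, algebraMap ℚ F q ≠ t := by
    intro q hq
    apply ten_not_sq q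
    have : algebraMap ℚ F (q^2) = algebraMap ℚ F 10 := by
      rw [map_pow, hq, sq, ht2, map_ofNat]
    exact (algebraMap ℚ F).injective this
  -- ℚ-basis {1, t} of F
  have hLI : LinearIndependent ℚ ![(1:F), t] := by
    rw [LinearIndependent.pair_iff]
    intro c d h
    by_cases hd : d = 0
    · subst hd
      exact ⟨by simpa using h, rfl⟩
    · exfalso
      apply htirr (-c/d)
      have hdt : d • t = (-c) • (1:F) := by
        have : c • (1:F) + d • t = 0 := h
        rw [neg_smul]
        linear_combination (norm := module) this
      rw [Algebra.algebraMap_eq_smul_one]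
      calc (-c/d) • (1:F) = d⁻¹ • ((-c) • (1:F)) := by
            rw [smul_smul, div_eq_inv_mul]
        _ = d⁻¹ • (d • t) := by rw [hdt]
        _ = t := by rw [smul_smul, inv_mul_cancel₀ hd, one_smul]
  have hcard : Fintype.card (Fin 2) = finrank ℚ F := by simp [hdeg]
  let BQ : Basis (Fin 2) ℚ F := basisOfLinearIndependentOfCardEqFinrank hLI hcard
  have hBQ : ⇑BQ = ![(1:F), t] := coe_basisOfLinearIndependentOfCardEqFinrank _ _
  have hBQ0 : BQ 0 = 1 := by rw [hBQ]; rfl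
  have hBQ1 : BQ 1 = t := by rw [hBQ]; rfl
  have hrepr : ∀ x : F, x = (BQ.repr x 0) • (1:F) + (BQ.repr x 1) • t := by
    intro x
    have h := BQ.sum_repr x
    rw [Fin.sum_univ_two, hBQ0, hBQ1] at h
    exact h.symm
  -- every element of 𝓞 F is a ℤ-combination of 1 and s
  have hxab : ∀ x : 𝓞 F, ∃ a b : ℤ, x = a • (1:𝓞 F) + b • s := by
    intro x
    set xa := BQ.repr (algebraMap (𝓞 F) F x) 0 with hxa
    set xb := BQ.repr (algebraMap (𝓞 F) F x) 1 with hxb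
    have hx : (algebraMap (𝓞 F) F x) = xa • (1:F) + xb • t := hrepr _
    have htr : Algebra.trace ℚ F (algebraMap (𝓞 F) F x) = 2 * xa := by
      rw [hx]; exact trace_form_aux BQ t hBQ0 hBQ1 ht2 xa xb
    have hnm : Algebra.norm ℚ (algebraMap (𝓞 F) F x) = xa^2 - 10*xb^2 := by
      rw [hx]; exact norm_form_aux BQ t hBQ0 hBQ1 ht2 xa xb
    have hxi : IsIntegral ℤ (algebraMap (𝓞 F) F x) := RingOfIntegers.isIntegral_coe x
    obtain ⟨tt, htt⟩ := IsIntegrallyClosed.isIntegral_iff.mp (Algebra.isIntegral_trace (L := ℚ) hxi)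
    obtain ⟨nn, hnn⟩ := IsIntegrallyClosed.isIntegral_iff.mp (Algebra.isIntegral_norm ℚ hxi)
    obtain ⟨a', b', ha', hb'⟩ := rat_int_lemma xa xb tt nn
      (by rw [← htr, ← htt]; simp) (by rw [← hnm, ← hnn]; simp)
    refine ⟨a', b', IsFractionRing.injective (𝓞 F) F ?_⟩
    rw [map_add, map_zsmul, map_zsmul, map_one]
    rw [hx, ← ha', ← hb', ← htdef, Int.cast_smul_eq_zsmul, Int.cast_smul_eq_zsmul]
  -- ℤ-linear independence of (1, s) in 𝓞 F
  have hLIZ : LinearIndependent ℤ ![(1:𝓞 F), s] := by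
    have hLIZ' : LinearIndependent ℤ ![(1:F), t] :=
      hLI.restrict_scalars (by
        intro x y h
        simpa using h)
    have hcomp : (algebraMap (𝓞 F) F) ∘ ![(1:𝓞 F), s] = ![(1:F), t] := by
      funext i
      fin_cases i <;> simp [htdef]
    apply LinearIndependent.of_comp ((Algebra.linearMap (𝓞 F) F).restrictScalars ℤ)
    have heq : (⇑((Algebra.linearMap (𝓞 F) F).restrictScalars ℤ)) ∘ ![(1:𝓞 F), s]
        = ![(1:F), t] := hcomp
    rw [heq]
    exact hLIZ'
  have hspanZ : ⊤ ≤ Submodule.span ℤ (Set.range ![(1:𝓞 F), s]) := by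
    intro x _
    obtain ⟨a, b, hab⟩ := hxab x
    rw [hab]
    refine add_mem (Submodule.smul_mem _ _ ?_) (Submodule.smul_mem _ _ ?_) <;>
      apply Submodule.subset_span
    · exact ⟨0, rfl⟩
    · exact ⟨1, rfl⟩
  let B : Basis (Fin 2) ℤ (𝓞 F) := Basis.mk hLIZ hspanZ
  have hB0 : B 0 = 1 := by rw [Basis.mk_apply]; rfl
  have hB1 : B 1 = s := by rw [Basis.mk_apply]; rfl
  have hBrepr : ∀ x : 𝓞 F, x = (B.repr x 0) • (1:𝓞 F) + (B.repr x 1) • s := by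
    intro x
    have h := B.sum_repr x
    rw [Fin.sum_univ_two, hB0, hB1] at h
    exact h.symm
  have hnormZ : ∀ a b : ℤ, Algebra.norm ℤ (a • (1:𝓞 F) + b • s) = a^2 - 10*b^2 :=
    norm_form_aux B s hB0 hB1 hss
  have htraceZ : ∀ a b : ℤ, Algebra.trace ℤ (𝓞 F) (a • (1:𝓞 F) + b • s) = 2*a :=
    trace_form_aux B s hB0 hB1 hss
  have hfr : finrank ℤ (𝓞 F) = 2 := by
    rw [finrank_eq_card_basis B, Fintype.card_fin]
  -- basic members of P
  have h2P : (2:𝓞 F) ∈ P := Ideal.subset_span (by simp)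
  have hsP : s ∈ P := Ideal.subset_span (by simp)
  -- absNorm of (2)
  have h2norm : Ideal.absNorm (Ideal.span {(2:𝓞 F)}) = 4 := by
    rw [Ideal.absNorm_span_singleton]
    have h2' : (2:𝓞 F) = (2:ℤ) • (1:𝓞 F) + (0:ℤ) • s := by simp
    rw [h2', hnormZ]
    norm_num
  -- P^2 = (2)
  have hP2 : Ideal.span {(2:𝓞 F)} = P^2 := by
    have hins : P = Ideal.span {(2:𝓞 F)} ⊔ Ideal.span {s} := by
      rw [hPdef, Ideal.span_insert]
    apply le_antisymm
    · rw [Ideal.span_le, Set.singleton_subset_iff]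
      have h4 : (4:𝓞 F) ∈ P^2 := by
        have h44 : (4:𝓞 F) = 2*2 := by norm_num
        rw [h44, sq]
        exact Ideal.mul_mem_mul h2P h2P
      have h10 : (10:𝓞 F) ∈ P^2 := by
        rw [← hss, sq]
        exact Ideal.mul_mem_mul hsP hsP
      have h2eq : (2:𝓞 F) = 10 - 2*4 := by norm_num
      rw [h2eq]
      exact sub_mem h10 (Ideal.mul_mem_left _ _ h4)
    · rw [sq, hins]
      simp only [Ideal.sup_mul, Ideal.mul_sup, Ideal.span_singleton_mul_span_singleton]
      refine sup_le (sup_le ?_ ?_) (sup_le ?_ ?_) <;>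
        refine Ideal.span_singleton_le_span_singleton.mpr ?_
      · exact ⟨2, by norm_num⟩
      · exact ⟨s, mul_comm s 2⟩
      · exact ⟨s, rfl⟩
      · exact ⟨5, by rw [hss]; norm_num⟩
  -- absNorm of P
  have hPnorm : Ideal.absNorm P = 2 := by
    have hsq : (Ideal.absNorm P) * (Ideal.absNorm P) = 4 := by
      have := congrArg Ideal.absNorm hP2
      rw [h2norm, sq, map_mul] at this
      omega
    have hle : Ideal.absNorm P ≤ 4 := by nlinarith
    interval_cases h : Ideal.absNorm P <;> omega
  -- P is prime
  have hPprime : P.IsPrime := Ideal.isPrime_of_irreducible_absNorm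
    (by rw [hPnorm]; exact Nat.prime_two.prime.irreducible)
  -- P is not principal
  have hPnp : ¬ ∃ x : 𝓞 F, P = Ideal.span {x} := by
    rintro ⟨x, hx⟩
    have h2' : (Algebra.norm ℤ x).natAbs = 2 := by
      rw [← Ideal.absNorm_span_singleton, ← hx, hPnorm]
    obtain ⟨a, b, hab⟩ : ∃ a b : ℤ, x = a • (1:𝓞 F) + b • s :=
      ⟨B.repr x 0, B.repr x 1, hBrepr x⟩
    rw [hab, hnormZ] at h2'
    have hcases : a^2 - 10*b^2 = 2 ∨ a^2 - 10*b^2 = -2 := by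
      rcases Int.natAbs_eq (a^2 - 10*b^2) with h | h <;> rw [h2'] at h <;> omega
    have h5 : ((a:ZMod 5))^2 = 2 ∨ ((a:ZMod 5))^2 = 3 := by
      have h10z : (10: ZMod 5) * ((b:ZMod 5))^2 = 0 := by
        rw [show (10:ZMod 5) = 0 by decide, zero_mul]
      rcases hcases with h | h
      · left
        have h' := congrArg (fun z : ℤ => (z : ZMod 5)) h
        push_cast at h'
        linear_combination h' + h10z
      · right
        have h' := congrArg (fun z : ℤ => (z : ZMod 5)) h
        push_cast at h'
        have h5z : (5:ZMod 5) = 0 := by decide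
        linear_combination h' + h10z - h5z
    revert h5
    generalize (a : ZMod 5) = α
    revert α
    decide
  -- P is a nonzerodivisor
  have h2ne : (2:𝓞 F) ≠ 0 := two_ne_zero
  have hPbot : P ≠ ⊥ := by
    intro h
    rw [h] at h2P
    exact h2ne (Ideal.mem_bot.mp h2P)
  have hne : P ∈ (Ideal (𝓞 F))⁰ :=
    mem_nonZeroDivisors_iff_ne_zero.mpr (by simpa using hPbot)
  -- discriminant of F is 40
  have hdiscr : NumberField.discr F = 40 := by
    rw [← NumberField.discr_eq_discr F B, Algebra.discr_def]
    have hTM : Algebra.traceMatrix ℤ ⇑B = !![2, 0; 0, 20] := by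
      ext i j
      fin_cases i <;> fin_cases j <;>
        rw [Algebra.traceMatrix_apply, Algebra.traceForm_apply]
      · show Algebra.trace ℤ (𝓞 F) (B 0 * B 0) = 2
        have e : B 0 * B 0 = (1:ℤ) • (1:𝓞 F) + (0:ℤ) • s := by rw [hB0]; simp
        rw [e, htraceZ]; norm_num
      · show Algebra.trace ℤ (𝓞 F) (B 0 * B 1) = 0
        have e : B 0 * B 1 = (0:ℤ) • (1:𝓞 F) + (1:ℤ) • s := by rw [hB0, hB1]; simp
        rw [e, htraceZ]; norm_num
      · show Algebra.trace ℤ (𝓞 F) (B 1 * B 0) = 0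
        have e : B 1 * B 0 = (0:ℤ) • (1:𝓞 F) + (1:ℤ) • s := by rw [hB0, hB1]; simp
        rw [e, htraceZ]; norm_num
      · show Algebra.trace ℤ (𝓞 F) (B 1 * B 1) = 20
        have e : B 1 * B 1 = (10:ℤ) • (1:𝓞 F) + (0:ℤ) • s := by rw [hB1]; simp [hss]
        rw [e, htraceZ]; norm_num
    rw [hTM, Matrix.det_fin_two_of]
    norm_num
  -- all infinite places are real
  have hreal : ∀ w : InfinitePlace F, w.IsReal := by
    intro w
    rw [NumberField.InfinitePlace.isReal_iff, NumberField.ComplexEmbedding.isReal_iff]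
    have hφt : (starRingEnd ℂ) (w.embedding t) = w.embedding t := by
      apply conj_sq_aux
      rw [← map_mul, ht2, map_ofNat]
    ext x
    rw [NumberField.ComplexEmbedding.conjugate_coe_eq]
    conv_lhs => rw [hrepr x]
    conv_rhs => rw [hrepr x]
    simp only [Rat.smul_def, map_add, map_mul, map_ratCast, map_one, hφt]
  have hnr : NumberField.InfinitePlace.nrComplexPlaces F = 0 :=
    Fintype.card_eq_zero_iff.mpr
      ⟨fun ⟨w, hw⟩ => (NumberField.InfinitePlace.not_isReal_iff_isComplex.mpr hw) (hreal w)⟩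
  -- Minkowski bound: every class contains an ideal of norm at most 3
  have key : ∀ C : ClassGroup (𝓞 F), ∃ I : (Ideal (𝓞 F))⁰,
      ClassGroup.mk0 I = C ∧ Ideal.absNorm (I : Ideal (𝓞 F)) ≤ 3 := by
    intro C
    obtain ⟨I, hIC, hIle⟩ := NumberField.exists_ideal_in_class_of_norm_le C
    refine ⟨I, hIC, ?_⟩
    rw [hnr, hdeg, hdiscr] at hIle
    norm_num at hIle
    have h40 : Real.sqrt 40 < 8 := by
      rw [show (8:ℝ) = Real.sqrt 64 by
        rw [show (64:ℝ) = 8^2 by norm_num, Real.sqrt_sq (by norm_num)]]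
      exact Real.sqrt_lt_sqrt (by norm_num) (by norm_num)
    have hlt : (Ideal.absNorm (I : Ideal (𝓞 F)) : ℝ) < 4 := by
      calc (Ideal.absNorm (I : Ideal (𝓞 F)) : ℝ) ≤ 1 / 2 * Real.sqrt 40 := hIle
        _ < 1 / 2 * 8 := by
            apply mul_lt_mul_of_pos_left h40
            norm_num
        _ = 4 := by norm_num
    have : Ideal.absNorm (I : Ideal (𝓞 F)) < 4 := by exact_mod_cast hlt
    omega
  -- classification of ideals of small norm
  have classify : ∀ I : (Ideal (𝓞 F))⁰, Ideal.absNorm (I : Ideal (𝓞 F)) ≤ 3 →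
      ClassGroup.mk0 I ∈ Subgroup.zpowers (ClassGroup.mk0 ⟨P, hne⟩) := by
    intro I hI3
    have hI0 : Ideal.absNorm (I : Ideal (𝓞 F)) ≠ 0 :=
      Ideal.absNorm_ne_zero_of_nonZeroDivisors I
    have hIcases : Ideal.absNorm (I : Ideal (𝓞 F)) = 1 ∨
        Ideal.absNorm (I : Ideal (𝓞 F)) = 2 ∨ Ideal.absNorm (I : Ideal (𝓞 F)) = 3 := by omega
    rcases hIcases with h1 | h2 | h3
    · -- norm 1 : I = ⊤
      have : ClassGroup.mk0 I = 1 := by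
        refine (ClassGroup.mk0_eq_one_iff I.2).mpr ?_
        rw [Ideal.absNorm_eq_one_iff.mp h1]
        exact top_isPrincipal
      rw [this]
      exact Subgroup.one_mem _
    · -- norm 2 : I = P
      have hIp : (I : Ideal (𝓞 F)).IsPrime := Ideal.isPrime_of_irreducible_absNorm
        (by rw [h2]; exact Nat.prime_two.prime.irreducible)
      have h2I : (2:𝓞 F) ∈ (I : Ideal (𝓞 F)) := by
        have hm := Ideal.absNorm_mem (I : Ideal (𝓞 F))
        rw [h2] at hm
        exact_mod_cast hm
      have h10I : (10:𝓞 F) ∈ (I : Ideal (𝓞 F)) := by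
        have : (10:𝓞 F) = 5 * 2 := by norm_num
        rw [this]
        exact Ideal.mul_mem_left _ _ h2I
      have hsI : s ∈ (I : Ideal (𝓞 F)) := by
        rcases hIp.mem_or_mem (by rw [hss]; exact h10I : s * s ∈ (I : Ideal (𝓞 F))) with h | h
        · exact h
        · exact h
      have hPI : P ≤ (I : Ideal (𝓞 F)) := by
        rw [hPdef, Ideal.span_le]
        rintro x hx
        simp only [Set.mem_insert_iff, Set.mem_singleton_iff] at hx
        rcases hx with rfl | rfl
        · exact h2I
        · exact hsI
      have hItop : (I : Ideal (𝓞 F)) ≠ ⊤ := by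
        intro h
        rw [Ideal.absNorm_eq_one_iff.mpr h] at h2
        omega
      have hPmax : P.IsMaximal := Ideal.IsPrime.isMaximal hPprime hPbot
      have hIP : (I : Ideal (𝓞 F)) = P := (hPmax.eq_of_le hItop hPI).symm
      have : (⟨P, hne⟩ : (Ideal (𝓞 F))⁰) = I := Subtype.ext hIP.symm
      rw [← this]
      exact Subgroup.mem_zpowers _
    · -- norm 3
      have hIp : (I : Ideal (𝓞 F)).IsPrime := Ideal.isPrime_of_irreducible_absNorm
        (by rw [h3]; exact Nat.prime_three.prime.irreducible)
      have h3I : (3:𝓞 F) ∈ (I : Ideal (𝓞 F)) := by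
        have hm := Ideal.absNorm_mem (I : Ideal (𝓞 F))
        rw [h3] at hm
        exact_mod_cast hm
      have h9I : (s-1)*(s+1) ∈ (I : Ideal (𝓞 F)) := by
        have he : (s-1)*(s+1) = 3*3 := by linear_combination hss
        rw [he]
        exact Ideal.mul_mem_left _ _ h3I
      have main : ∀ y : 𝓞 F, y ∈ (I : Ideal (𝓞 F)) →
          (∀ u : 𝓞 F, s + u - 1 = y + u - 1) → True := fun _ _ _ => trivial
      rcases hIp.mem_or_mem h9I with hm | hm
      · -- s - 1 ∈ I, P * I = span {s + 2}
        have hmem : s + 2 ∈ P * (I : Ideal (𝓞 F)) := by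
          have hx1 : s*3 ∈ P * (I : Ideal (𝓞 F)) := Ideal.mul_mem_mul hsP h3I
          have hx2 : 2*(s-1) ∈ P * (I : Ideal (𝓞 F)) := Ideal.mul_mem_mul h2P hm
          have he : s + 2 = s*3 - 2*(s-1) := by ring
          rw [he]
          exact sub_mem hx1 hx2
        obtain ⟨K, hK⟩ : P * (I : Ideal (𝓞 F)) ∣ Ideal.span {s+2} :=
          Ideal.dvd_iff_le.mpr (by rwa [Ideal.span_le, Set.singleton_subset_iff])
        have h6 : Ideal.absNorm (Ideal.span {s+2}) = 6 := by
          rw [Ideal.absNorm_span_singleton]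
          have he : s + 2 = (2:ℤ) • (1:𝓞 F) + (1:ℤ) • s := by simp [add_comm]
          rw [he, hnormZ]
          norm_num
        have hKtop : K = ⊤ := by
          apply Ideal.absNorm_eq_one_iff.mp
          rw [hK, absNorm_mul_eq, absNorm_mul_eq, hPnorm, h3] at h6
          omega
        have hprin : P * (I : Ideal (𝓞 F)) = Ideal.span {s+2} := by
          rw [hK, hKtop, Ideal.mul_top]
        have hsne : s + (2:𝓞 F) ≠ 0 := by
          intro h0
          have hsval : s = -(2:𝓞 F) := by linear_combination h0
          rw [hsval] at hss
          norm_num at hss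
        have hinv : ClassGroup.mk0 I = (ClassGroup.mk0 ⟨P, hne⟩)⁻¹ := by
          apply ClassGroup.mk0_eq_mk0_inv_iff.mpr
          refine ⟨s + 2, hsne, ?_⟩
          rw [mul_comm]
          exact hprin
        rw [hinv]
        exact Subgroup.inv_mem _ (Subgroup.mem_zpowers _)
      · -- s + 1 ∈ I, P * I = span {s - 2}
        have hmem : s - 2 ∈ P * (I : Ideal (𝓞 F)) := by
          have hx1 : s*3 ∈ P * (I : Ideal (𝓞 F)) := Ideal.mul_mem_mul hsP h3I
          have hx2 : 2*(s+1) ∈ P * (I : Ideal (𝓞 F)) := Ideal.mul_mem_mul h2P hm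
          have he : s - 2 = s*3 - 2*(s+1) := by ring
          rw [he]
          exact sub_mem hx1 hx2
        obtain ⟨K, hK⟩ : P * (I : Ideal (𝓞 F)) ∣ Ideal.span {s-2} :=
          Ideal.dvd_iff_le.mpr (by rwa [Ideal.span_le, Set.singleton_subset_iff])
        have h6 : Ideal.absNorm (Ideal.span {s-2}) = 6 := by
          rw [Ideal.absNorm_span_singleton]
          have he : s - 2 = (-2:ℤ) • (1:𝓞 F) + (1:ℤ) • s := by
            simp [sub_eq_add_neg, add_comm]
          rw [he, hnormZ]
          norm_num
        have hKtop : K = ⊤ := by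
          apply Ideal.absNorm_eq_one_iff.mp
          rw [hK, absNorm_mul_eq, absNorm_mul_eq, hPnorm, h3] at h6
          omega
        have hprin : P * (I : Ideal (𝓞 F)) = Ideal.span {s-2} := by
          rw [hK, hKtop, Ideal.mul_top]
        have hsne : s - (2:𝓞 F) ≠ 0 := by
          intro h0
          have hsval : s = (2:𝓞 F) := by linear_combination h0
          rw [hsval] at hss
          norm_num at hss
        have hinv : ClassGroup.mk0 I = (ClassGroup.mk0 ⟨P, hne⟩)⁻¹ := by
          apply ClassGroup.mk0_eq_mk0_inv_iff.mpr
          refine ⟨s - 2, hsne, ?_⟩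
          rw [mul_comm]
          exact hprin
        rw [hinv]
        exact Subgroup.inv_mem _ (Subgroup.mem_zpowers _)
  -- the generator and its order
  set g : ClassGroup (𝓞 F) := ClassGroup.mk0 ⟨P, hne⟩ with hgdef
  have hgen : ∀ C : ClassGroup (𝓞 F), C ∈ Subgroup.zpowers g := by
    intro C
    obtain ⟨I, hIC, hI3⟩ := key C
    rw [← hIC]
    exact classify I hI3
  have hPP : ClassGroup.mk0 (⟨P, hne⟩ : (Ideal (𝓞 F))⁰) =
      (ClassGroup.mk0 (⟨P, hne⟩ : (Ideal (𝓞 F))⁰))⁻¹ :=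
    ClassGroup.mk0_eq_mk0_inv_iff.mpr ⟨(2:𝓞 F), h2ne, by
      show P * P = Ideal.span {(2:𝓞 F)}
      rw [hP2, sq]⟩
  have hg2 : g^2 = 1 := by
    rw [hgdef, pow_two]
    nth_rewrite 2 [hPP]
    group
  have hg1 : g ≠ 1 := by
    intro h
    rw [hgdef] at h
    obtain ⟨x, hx⟩ := (ClassGroup.mk0_eq_one_iff hne).mp h
    exact hPnp ⟨x, hx⟩
  have horder : orderOf g = 2 := orderOf_eq_prime hg2 hg1
  have hcard2 : Nat.card (ClassGroup (𝓞 F)) = 2 := by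
    have hztop : Subgroup.zpowers g = ⊤ := (Subgroup.eq_top_iff' _).mpr hgen
    rw [← Subgroup.card_top (G := ClassGroup (𝓞 F)), ← hztop, Nat.card_zpowers, horder]
  exact ⟨hPprime, hP2, hPnp, hcard2, hne, hgen⟩
end
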